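/- Let 𝒢 = ⟨V, E, P, G, B⟩ be a finite edge-colored directed graph and let p, g, b be three distinct constants. Define the instance r_𝒢 of a ternary relation R to consist of the tuples (x, y, p) for (x, y) ∈ P, (x, y, g) for (x, y) ∈ G, and (x, y, b) for (x, y) ∈ B. Call a subset S ⊆ r_𝒢 consistent if it satisfies the denial constraint ∀x,y,z,w,s,s',s'' ¬[R(x,y,s) ∧ R(y,z,s') ∧ R(y,w,s'') ∧ s' ≠ s''], i.e., there are no tuples (x, y, s), (y, z, s'), (y, w, s'') in S with s' ≠ s''. Then there exists a repair S of r_𝒢 (a maximal consistent subset of r_𝒢) containing no tuple of the form (x, y, p) — i.e., a repair in which the query ∃x,y R(x,y,p) is false — if and only if 𝒢 has the max-Y-free property. (This is the core of the theorem that consistent query answering is co-NP-complete for a single denial constraint and a single-atom conjunctive query.) -/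
import Mathlib


/-- The edge-colored directed graph with color classes `P, G, B` has the Y-property:
there are `x, y, z, t` with `(x,y), (y,z), (y,t)` edges such that `(y,z)` and `(y,t)`
have different colors. -/
def HasY {V : Type*} (P G B : Set (V × V)) : Prop :=
  ∃ x y z t : V, (x, y) ∈ P ∪ G ∪ B ∧
    (((y, z) ∈ P ∧ ((y, t) ∈ G ∨ (y, t) ∈ B)) ∨
     ((y, z) ∈ G ∧ ((y, t) ∈ P ∨ (y, t) ∈ B)) ∨
     ((y, z) ∈ B ∧ ((y, t) ∈ P ∨ (y, t) ∈ G)))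

/-- The edge-colored graph `⟨V, E, P, G, B⟩` (with `E = P ∪ G ∪ B`) has the
max-Y-free property. -/
def MaxYFree {V : Type*} (P G B : Set (V × V)) : Prop :=
  ∃ M ⊆ P ∪ G ∪ B, M ∩ P = ∅ ∧ ¬ HasY (P ∩ M) (G ∩ M) (B ∩ M) ∧
    ∀ M' ⊆ P ∪ G ∪ B, ¬ HasY (P ∩ M') (G ∩ M') (B ∩ M') → M ⊆ M' → M' = M

/-- The instance `r_𝒢`: tuples `(x, y, p)` for `(x,y) ∈ P`, `(x, y, g)` for
`(x,y) ∈ G`, and `(x, y, b)` for `(x,y) ∈ B`. -/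
def ecInstance {V γ : Type*} (P G B : Set (V × V)) (p g b : γ) : Set (V × V × γ) :=
  {t | ((t.1, t.2.1) ∈ P ∧ t.2.2 = p) ∨ ((t.1, t.2.1) ∈ G ∧ t.2.2 = g) ∨
       ((t.1, t.2.1) ∈ B ∧ t.2.2 = b)}

/-- `S` satisfies the denial constraint
`∀x,y,z,w,s,s',s'' ¬[R(x,y,s) ∧ R(y,z,s') ∧ R(y,w,s'') ∧ s' ≠ s'']`. -/
def ConsDenial {V γ : Type*} (S : Set (V × V × γ)) : Prop :=
  ¬ ∃ (x y z w : V) (s s' s'' : γ),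
      (x, y, s) ∈ S ∧ (y, z, s') ∈ S ∧ (y, w, s'') ∈ S ∧ s' ≠ s''

section Aux
variable {V γ : Type*} {P G B : Set (V × V)} {p g b : γ}

lemma mem_ec_iff {x y : V} {c : γ} :
    (x, y, c) ∈ ecInstance P G B p g b ↔
      ((x, y) ∈ P ∧ c = p) ∨ ((x, y) ∈ G ∧ c = g) ∨ ((x, y) ∈ B ∧ c = b) := Iff.rfl

lemma exists_color {a a' : V} (h : (a, a') ∈ P ∪ G ∪ B) :
    ∃ s, (a, a', s) ∈ ecInstance P G B p g b := by
  rcases h with (h | h) | h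
  exacts [⟨p, Or.inl ⟨h, rfl⟩⟩, ⟨g, Or.inr (Or.inl ⟨h, rfl⟩)⟩, ⟨b, Or.inr (Or.inr ⟨h, rfl⟩)⟩]

lemma cons_iff (hpg : p ≠ g) (hpb : p ≠ b) (hgb : g ≠ b) :
    ConsDenial (ecInstance P G B p g b) ↔ ¬ HasY P G B := by
  unfold ConsDenial HasY
  constructor
  · rintro h ⟨x, y, z, t, hxy, hY⟩
    apply h
    obtain ⟨s, hs⟩ := exists_color (p := p) (g := g) (b := b) hxy
    refine ⟨x, y, z, t, s, ?_⟩
    rcases hY with ⟨h1, h2 | h2⟩ | ⟨h1, h2 | h2⟩ | ⟨h1, h2 | h2⟩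
    · exact ⟨p, g, hs, Or.inl ⟨h1, rfl⟩, Or.inr (Or.inl ⟨h2, rfl⟩), hpg⟩
    · exact ⟨p, b, hs, Or.inl ⟨h1, rfl⟩, Or.inr (Or.inr ⟨h2, rfl⟩), hpb⟩
    · exact ⟨g, p, hs, Or.inr (Or.inl ⟨h1, rfl⟩), Or.inl ⟨h2, rfl⟩, hpg.symm⟩
    · exact ⟨g, b, hs, Or.inr (Or.inl ⟨h1, rfl⟩), Or.inr (Or.inr ⟨h2, rfl⟩), hgb⟩
    · exact ⟨b, p, hs, Or.inr (Or.inr ⟨h1, rfl⟩), Or.inl ⟨h2, rfl⟩, hpb.symm⟩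
    · exact ⟨b, g, hs, Or.inr (Or.inr ⟨h1, rfl⟩), Or.inr (Or.inl ⟨h2, rfl⟩), hgb.symm⟩
  · rintro h ⟨x, y, z, w, s, s', s'', h1, h2, h3, hne⟩
    apply h
    have hxy : (x, y) ∈ P ∪ G ∪ B := by
      rcases h1 with ⟨h1, _⟩ | ⟨h1, _⟩ | ⟨h1, _⟩
      exacts [Or.inl (Or.inl h1), Or.inl (Or.inr h1), Or.inr h1]
    refine ⟨x, y, z, w, hxy, ?_⟩
    rcases h2 with ⟨h2, rfl⟩ | ⟨h2, rfl⟩ | ⟨h2, rfl⟩ <;>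
      rcases h3 with ⟨h3, rfl⟩ | ⟨h3, rfl⟩ | ⟨h3, rfl⟩
    · exact absurd rfl hne
    · exact Or.inl ⟨h2, Or.inl h3⟩
    · exact Or.inl ⟨h2, Or.inr h3⟩
    · exact Or.inr (Or.inl ⟨h2, Or.inl h3⟩)
    · exact absurd rfl hne
    · exact Or.inr (Or.inl ⟨h2, Or.inr h3⟩)
    · exact Or.inr (Or.inr ⟨h2, Or.inl h3⟩)
    · exact Or.inr (Or.inr ⟨h2, Or.inr h3⟩)
    · exact absurd rfl hne

/-- the edge projection of a set of tuples -/
def proj {V γ : Type*} (S : Set (V × V × γ)) : Set (V × V) :=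
  {e | ∃ c, (e.1, e.2, c) ∈ S}

lemma phi_eq (hPG : P ∩ G = ∅) (hPB : P ∩ B = ∅) (hGB : G ∩ B = ∅)
    {S : Set (V × V × γ)} (hS : S ⊆ ecInstance P G B p g b) :
    S = ecInstance (P ∩ proj S) (G ∩ proj S) (B ∩ proj S) p g b := by
  have hd : ∀ {u v : V}, (u, v) ∈ P → (u, v) ∈ G → False := fun h1 h2 =>
    Set.eq_empty_iff_forall_notMem.mp hPG _ ⟨h1, h2⟩
  have hd2 : ∀ {u v : V}, (u, v) ∈ P → (u, v) ∈ B → False := fun h1 h2 =>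
    Set.eq_empty_iff_forall_notMem.mp hPB _ ⟨h1, h2⟩
  have hd3 : ∀ {u v : V}, (u, v) ∈ G → (u, v) ∈ B → False := fun h1 h2 =>
    Set.eq_empty_iff_forall_notMem.mp hGB _ ⟨h1, h2⟩
  ext ⟨x, y, c⟩
  simp only [ecInstance, proj, Set.mem_setOf_eq, Set.mem_inter_iff]
  constructor
  · intro hmem
    rcases hS hmem with ⟨h1, hc⟩ | ⟨h1, hc⟩ | ⟨h1, hc⟩
    · exact Or.inl ⟨⟨h1, ⟨c, hmem⟩⟩, hc⟩
    · exact Or.inr (Or.inl ⟨⟨h1, ⟨c, hmem⟩⟩, hc⟩)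
    · exact Or.inr (Or.inr ⟨⟨h1, ⟨c, hmem⟩⟩, hc⟩)
  · rintro (⟨⟨h1, c', hc'⟩, rfl⟩ | ⟨⟨h1, c', hc'⟩, rfl⟩ | ⟨⟨h1, c', hc'⟩, rfl⟩) <;>
      rcases hS hc' with ⟨h2, rfl⟩ | ⟨h2, rfl⟩ | ⟨h2, rfl⟩
    · exact hc'
    · exact absurd h2 (fun h => hd h1 h)
    · exact absurd h2 (fun h => hd2 h1 h)
    · exact absurd h1 (fun h => hd h2 h)
    · exact hc'
    · exact absurd h2 (fun h => hd3 h1 h)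
    · exact absurd h1 (fun h => hd2 h2 h)
    · exact absurd h1 (fun h => hd3 h2 h)
    · exact hc'

lemma proj_phi {M : Set (V × V)} (hM : M ⊆ P ∪ G ∪ B) :
    proj (ecInstance (P ∩ M) (G ∩ M) (B ∩ M) p g b : Set (V × V × γ)) = M := by
  ext ⟨x, y⟩
  constructor
  · rintro ⟨c, ⟨⟨_, h⟩, _⟩ | ⟨⟨_, h⟩, _⟩ | ⟨⟨_, h⟩, _⟩⟩ <;> exact h
  · intro h
    rcases hM h with (h1 | h1) | h1
    · exact ⟨p, Or.inl ⟨⟨h1, h⟩, rfl⟩⟩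
    · exact ⟨g, Or.inr (Or.inl ⟨⟨h1, h⟩, rfl⟩)⟩
    · exact ⟨b, Or.inr (Or.inr ⟨⟨h1, h⟩, rfl⟩)⟩

lemma phi_sub {M : Set (V × V)} :
    (ecInstance (P ∩ M) (G ∩ M) (B ∩ M) p g b : Set (V × V × γ)) ⊆
      ecInstance P G B p g b := by
  rintro ⟨x, y, c⟩ (⟨⟨h, _⟩, hc⟩ | ⟨⟨h, _⟩, hc⟩ | ⟨⟨h, _⟩, hc⟩)
  exacts [Or.inl ⟨h, hc⟩, Or.inr (Or.inl ⟨h, hc⟩), Or.inr (Or.inr ⟨h, hc⟩)]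

lemma phi_mono {M M' : Set (V × V)} (h : M ⊆ M') :
    (ecInstance (P ∩ M) (G ∩ M) (B ∩ M) p g b : Set (V × V × γ)) ⊆
      ecInstance (P ∩ M') (G ∩ M') (B ∩ M') p g b := by
  rintro ⟨x, y, c⟩ (⟨⟨h1, h2⟩, hc⟩ | ⟨⟨h1, h2⟩, hc⟩ | ⟨⟨h1, h2⟩, hc⟩)
  exacts [Or.inl ⟨⟨h1, h h2⟩, hc⟩, Or.inr (Or.inl ⟨⟨h1, h h2⟩, hc⟩),
    Or.inr (Or.inr ⟨⟨h1, h h2⟩, hc⟩)]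

end Aux

/-- For a finite edge-colored directed graph `𝒢 = ⟨V, E, P, G, B⟩` there is a repair of
`r_𝒢` with respect to the denial constraint in which the query `∃x,y R(x,y,p)` is false
iff `𝒢` has the max-Y-free property. -/
theorem stmt_6 {V γ : Type*} (P G B : Set (V × V))
    (hPG : P ∩ G = ∅) (hPB : P ∩ B = ∅) (hGB : G ∩ B = ∅)
    (hfin : (P ∪ G ∪ B).Finite)
    (p g b : γ) (hpg : p ≠ g) (hpb : p ≠ b) (hgb : g ≠ b) :
    (∃ S : Set (V × V × γ),
        S ⊆ ecInstance P G B p g b ∧ ConsDenial S ∧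
        (∀ S' : Set (V × V × γ), S' ⊆ ecInstance P G B p g b → ConsDenial S' →
          S ⊆ S' → S' = S) ∧
        ¬ ∃ x y, (x, y, p) ∈ S) ↔
      MaxYFree P G B := by
  constructor
  · rintro ⟨S, hSsub, hScons, hSmax, hSp⟩
    have hprojE : proj S ⊆ P ∪ G ∪ B := by
      rintro ⟨x, y⟩ ⟨c, hc⟩
      rcases hSsub hc with ⟨h, _⟩ | ⟨h, _⟩ | ⟨h, _⟩
      exacts [Or.inl (Or.inl h), Or.inl (Or.inr h), Or.inr h]
    have hSeq := phi_eq hPG hPB hGB hSsub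
    refine ⟨proj S, hprojE, ?_, ?_, ?_⟩
    · ext ⟨x, y⟩
      simp only [Set.mem_inter_iff, Set.mem_empty_iff_false, iff_false, not_and]
      rintro ⟨c, hc⟩ hP
      rcases hSsub hc with ⟨_, rfl⟩ | ⟨hG, _⟩ | ⟨hB, _⟩
      · exact hSp ⟨x, y, hc⟩
      · exact Set.eq_empty_iff_forall_notMem.mp hPG (x, y) ⟨hP, hG⟩
      · exact Set.eq_empty_iff_forall_notMem.mp hPB (x, y) ⟨hP, hB⟩
    · rw [hSeq] at hScons
      exact (cons_iff hpg hpb hgb).mp hScons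
    · intro M' hM' hM'Y hMM'
      have hS'eq : ecInstance (P ∩ M') (G ∩ M') (B ∩ M') p g b = S := by
        refine hSmax _ phi_sub ((cons_iff hpg hpb hgb).mpr hM'Y) ?_
        rw [hSeq]
        exact phi_mono hMM'
      calc M' = proj (ecInstance (P ∩ M') (G ∩ M') (B ∩ M') p g b) :=
              (proj_phi hM').symm
        _ = proj S := by rw [hS'eq]
  · rintro ⟨M, hME, hMP, hMY, hMmax⟩
    refine ⟨ecInstance (P ∩ M) (G ∩ M) (B ∩ M) p g b, phi_sub,
      (cons_iff hpg hpb hgb).mpr hMY, ?_, ?_⟩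
    · intro S' hS'sub hS'cons hsub
      have hproj : proj S' ⊆ P ∪ G ∪ B := by
        rintro ⟨x, y⟩ ⟨c, hc⟩
        rcases hS'sub hc with ⟨h, _⟩ | ⟨h, _⟩ | ⟨h, _⟩
        exacts [Or.inl (Or.inl h), Or.inl (Or.inr h), Or.inr h]
      have hS'eq := phi_eq hPG hPB hGB hS'sub
      have hMM' : M ⊆ proj S' := by
        rw [← proj_phi (p := p) (g := g) (b := b) hME]
        rintro ⟨x, y⟩ ⟨c, hc⟩
        exact ⟨c, hsub hc⟩
      have hY' : ¬ HasY (P ∩ proj S') (G ∩ proj S') (B ∩ proj S') := by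
        rw [hS'eq] at hS'cons
        exact (cons_iff hpg hpb hgb).mp hS'cons
      have := hMmax (proj S') hproj hY' hMM'
      rw [hS'eq, this]
    · rintro ⟨x, y, ⟨⟨_, hM⟩, _⟩ | ⟨_, hc⟩ | ⟨_, hc⟩⟩
      · exact Set.eq_empty_iff_forall_notMem.mp hMP (x, y) ⟨hM, by assumption⟩
      · exact hpg hc
      · exact hpb hc
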